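/- arXiv:math/0205001 — 2 statements merged into one kernel-verified Lean document; each statement's English description precedes it below -/
import Mathlib

section
/- Let μ be a positive measure on ℝ^n absolutely continuous with respect to Lebesgue measure, Q_0 a cube with 0 < μ(Q) < ∞ for every subcube Q ⊆ Q_0, and f a nonnegative μ-integrable function on Q_0. If f satisfies the Muckenhoupt A_∞(μ) condition on Q_0 with constants 0 < α, β < 1, then f satisfies the Gurov–Reshetnyak condition GR_μ(ε_0) on Q_0 with ε_0 = 2(1 − αβ), and 0 < ε_0 < 2. -/
open MeasureTheory

/-- A closed axis-parallel cube of positive side length in `ℝⁿ`. -/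
def IsCube {n : ℕ} (Q : Set (Fin n → ℝ)) : Prop :=
  ∃ (a : Fin n → ℝ) (h : ℝ), 0 < h ∧ Q = Set.Icc a (fun i => a i + h)

/-- The `μ`-average `f_{Q,μ} = (1/μ(Q)) ∫_Q f dμ`. -/
noncomputable def muAvg {n : ℕ} (μ : Measure (Fin n → ℝ)) (Q : Set (Fin n → ℝ))
    (f : (Fin n → ℝ) → ℝ) : ℝ :=
  (∫ x in Q, f x ∂μ) / (μ Q).toReal

/-- The mean oscillation `Ω_μ(f;Q) = (1/μ(Q)) ∫_Q |f − f_{Q,μ}| dμ`. -/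
noncomputable def muOsc {n : ℕ} (μ : Measure (Fin n → ℝ)) (Q : Set (Fin n → ℝ))
    (f : (Fin n → ℝ) → ℝ) : ℝ :=
  (∫ x in Q, |f x - muAvg μ Q f| ∂μ) / (μ Q).toReal

/-- The Gurov–Reshetnyak condition `GR_μ(ε)` on the cube `Q₀`. -/
def GurovReshetnyak {n : ℕ} (μ : Measure (Fin n → ℝ)) (Q₀ : Set (Fin n → ℝ))
    (f : (Fin n → ℝ) → ℝ) (ε : ℝ) : Prop :=
  ∀ Q : Set (Fin n → ℝ), IsCube Q → Q ⊆ Q₀ → muOsc μ Q f ≤ ε * muAvg μ Q f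

/-- The Muckenhoupt `A_∞(μ)` condition on `Q₀` with constants `α, β`. -/
def AinfWith {n : ℕ} (μ : Measure (Fin n → ℝ)) (Q₀ : Set (Fin n → ℝ))
    (f : (Fin n → ℝ) → ℝ) (α β : ℝ) : Prop :=
  ∀ Q : Set (Fin n → ℝ), IsCube Q → Q ⊆ Q₀ →
    ENNReal.ofReal α * μ Q < μ {x ∈ Q | f x > β * muAvg μ Q f}

/-! On a cube `Q` with average `a`, the identity `|y| = y + 2 max (-y) 0` and `∫_Q (f - a) = 0` give
`∫_Q |f - a| = 2 ∫_Q (a - f)⁺`. Where `f > β a` the integrand `(a - f)⁺` is at most `(1 - β) a`, and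
elsewhere it is at most `a` because `f ≥ 0`; as the superlevel set `{f > β a}` fills at least an
`α`-fraction of `Q`, this gives `∫_Q (a - f)⁺ ≤ (1 - α β) a μ(Q)`. -/

theorem IsCube.measurableSet {n : ℕ} {Q : Set (Fin n → ℝ)} (hQ : IsCube Q) : MeasurableSet Q := by
  obtain ⟨a, h, -, rfl⟩ := hQ
  exact measurableSet_Icc

section

variable {X : Type*} [MeasurableSpace X] {ν : Measure X} [IsFiniteMeasure ν] {f : X → ℝ}

theorem integral_abs_sub_const (hf : Integrable f ν) (c : ℝ) :
    ∫ x, |f x - c| ∂ν = ∫ x, f x ∂ν - ν.real Set.univ * c + 2 * ∫ x, max (c - f x) 0 ∂ν := by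
  have hneg : Integrable (fun x => max (c - f x) 0) ν := ((integrable_const c).sub hf).pos_part
  have hsplit : ∀ x, |f x - c| = (f x - c) + 2 * max (c - f x) 0 := fun x => by
    have habs := max_zero_add_max_neg_zero_eq_abs_self (f x - c)
    have hself := max_zero_sub_max_neg_zero_eq_self (f x - c)
    rw [neg_sub] at habs hself
    linarith
  have hsub : Integrable (fun x => f x - c) ν := hf.sub (integrable_const c)
  simp_rw [hsplit]
  rw [integral_add hsub (hneg.const_mul 2),
    integral_sub hf (integrable_const c), integral_const, integral_const_mul, smul_eq_mul]

theorem integral_max_sub_le (hf : Integrable f ν) (hf0 : 0 ≤ᵐ[ν] f) {c t : ℝ} (hc : 0 ≤ c)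
    (htc : t ≤ c) :
    ∫ x, max (c - f x) 0 ∂ν ≤ ν.real Set.univ * c - ν.real {x | t < f x} * t := by
  set E := {x | t < f x}
  have hE : NullMeasurableSet E ν := nullMeasurableSet_lt aemeasurable_const hf.aemeasurable
  have hind : Integrable (E.indicator fun _ => t) ν := (integrable_const t).indicator₀ hE
  have hpt : ∀ᵐ x ∂ν, max (c - f x) 0 ≤ c - E.indicator (fun _ => t) x := by
    filter_upwards [hf0] with x hx
    by_cases hxE : x ∈ E
    · rw [Set.indicator_of_mem hxE]
      exact max_le (by linarith [show t < f x from hxE]) (by linarith)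
    · rw [Set.indicator_of_notMem hxE]
      exact max_le (by linarith [show 0 ≤ f x from hx]) (by linarith)
  calc ∫ x, max (c - f x) 0 ∂ν ≤ ∫ x, (c - E.indicator (fun _ => t) x) ∂ν :=
        integral_mono_ae ((integrable_const c).sub hf).pos_part ((integrable_const c).sub hind) hpt
    _ = ν.real Set.univ * c - ν.real E * t := by
        rw [integral_sub (integrable_const c) hind, integral_indicator₀ hE, integral_const,
          setIntegral_const, smul_eq_mul, smul_eq_mul]

end

theorem muOsc_le_of_superlevel_measure_ge {n : ℕ} {μ : Measure (Fin n → ℝ)} {s : Set (Fin n → ℝ)}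
    {f : (Fin n → ℝ) → ℝ} (hs : MeasurableSet s) (hμ0 : μ s ≠ 0) (hμ : μ s ≠ ⊤)
    (hf0 : ∀ x ∈ s, 0 ≤ f x) (hf : IntegrableOn f s μ) {α β : ℝ} (hα : 0 ≤ α) (hβ0 : 0 ≤ β)
    (hβ1 : β ≤ 1) (hA : ENNReal.ofReal α * μ s ≤ μ {x ∈ s | f x > β * muAvg μ s f}) :
    muOsc μ s f ≤ 2 * (1 - α * β) * muAvg μ s f := by
  have : IsFiniteMeasure (μ.restrict s) := isFiniteMeasure_restrict.2 hμ
  set a := muAvg μ s f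
  have hm : 0 < μ.real s := ENNReal.toReal_pos hμ0 hμ
  have hf0' : 0 ≤ᵐ[μ.restrict s] f := ae_restrict_of_forall_mem hs hf0
  have ha0 : 0 ≤ a := div_nonneg (integral_nonneg_of_ae hf0') ENNReal.toReal_nonneg
  have hint : ∫ x in s, f x ∂μ = μ.real s * a := by
    simp only [a, muAvg, ← measureReal_def]
    field_simp
  have hsuper : α * μ.real s ≤ (μ.restrict s).real {x | β * a < f x} := by
    have hsub : μ {x ∈ s | f x > β * a} ≤ μ.restrict s {x | β * a < f x} := by
      convert Measure.le_restrict_apply s {x | β * a < f x} using 2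
      ext x
      simp [and_comm]
    have := ENNReal.toReal_mono (measure_ne_top _ _) (hA.trans hsub)
    rwa [ENNReal.toReal_mul, ENNReal.toReal_ofReal hα] at this
  have hneg := integral_max_sub_le hf hf0' ha0 (mul_le_of_le_one_left ha0 hβ1)
  have hosc : ∫ x in s, |f x - a| ∂μ ≤ 2 * (1 - α * β) * a * μ.real s := by
    rw [integral_abs_sub_const hf a, hint, measureReal_restrict_apply_univ]
    rw [measureReal_restrict_apply_univ] at hneg
    linarith [mul_le_mul_of_nonneg_right hsuper (mul_nonneg hβ0 ha0)]
  rwa [muOsc, ← measureReal_def, div_le_iff₀ hm]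

theorem stmt3_general {n : ℕ} (μ : Measure (Fin n → ℝ))
    (Q₀ : Set (Fin n → ℝ))
    (hQfin : ∀ Q : Set (Fin n → ℝ), IsCube Q → Q ⊆ Q₀ → 0 < μ Q ∧ μ Q < ⊤)
    (f : (Fin n → ℝ) → ℝ) (hf0 : ∀ x ∈ Q₀, 0 ≤ f x) (hfint : IntegrableOn f Q₀ μ)
    (α β : ℝ) (hα0 : 0 < α) (hα1 : α < 1) (hβ0 : 0 < β) (hβ1 : β < 1)
    (hA : AinfWith μ Q₀ f α β) :
    GurovReshetnyak μ Q₀ f (2 * (1 - α * β)) ∧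
      0 < 2 * (1 - α * β) ∧ 2 * (1 - α * β) < 2 := by
  refine ⟨fun Q hQ hQsub => ?_, by nlinarith, by nlinarith⟩
  obtain ⟨hμ0, hμ⟩ := hQfin Q hQ hQsub
  exact muOsc_le_of_superlevel_measure_ge hQ.measurableSet hμ0.ne' hμ.ne
    (fun x hx => hf0 x (hQsub hx)) (hfint.mono_set hQsub) hα0.le hβ0.le hβ1.le
    (hA Q hQ hQsub).le

/-- `A_∞(μ)` implies `GR_μ(ε₀)`: if `f` satisfies the Muckenhoupt `A_∞(μ)` condition
on `Q₀` with constants `0 < α, β < 1`, then `f` satisfies the Gurov–Reshetnyak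
condition with `ε₀ = 2(1 − αβ)`, and `0 < ε₀ < 2`. -/
theorem stmt3 {n : ℕ} (μ : Measure (Fin n → ℝ)) (hac : μ ≪ volume)
    (Q₀ : Set (Fin n → ℝ)) (hQ₀ : IsCube Q₀)
    (hQfin : ∀ Q : Set (Fin n → ℝ), IsCube Q → Q ⊆ Q₀ → 0 < μ Q ∧ μ Q < ⊤)
    (f : (Fin n → ℝ) → ℝ) (hf0 : ∀ x ∈ Q₀, 0 ≤ f x) (hfint : IntegrableOn f Q₀ μ)
    (α β : ℝ) (hα0 : 0 < α) (hα1 : α < 1) (hβ0 : 0 < β) (hβ1 : β < 1)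
    (hA : AinfWith μ Q₀ f α β) :
    GurovReshetnyak μ Q₀ f (2 * (1 - α * β)) ∧
      0 < 2 * (1 - α * β) ∧ 2 * (1 - α * β) < 2 :=
  stmt3_general μ Q₀ hQfin f hf0 hfint α β hα0 hα1 hβ0 hβ1 hA
end

section
/- Let μ be a positive measure on ℝ^n absolutely continuous with respect to Lebesgue measure, Q a cube with 0 < μ(Q) < ∞, and f a nonnegative μ-integrable function on Q satisfying Ω_μ(f; Q) ≤ ε·f_{Q,μ} for some 0 < ε < 2. Let ε < λ < 2 and let s ≥ 0 be any number such that μ{x ∈ Q : f(x) > s} < (1 − λ/2)·μ(Q). Then f_{Q,μ} ≤ (λ/(λ − ε))·s. -/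
/-!
Write `A` for the average of `f` over `Q`. Since `f - A` has integral zero, the mean oscillation is
twice the average of `(A - f)⁺`, and `(A - f)⁺ ≥ A - s` on `{f ≤ s}`, a set of measure more than
`λ/2 · μ(Q)`. Hence `ε A ≥ Ω_μ(f; Q) ≥ λ (A - s)` whenever `A > s`, which rearranges to the claim.
-/

open MeasureTheory

section MeanOscillation

variable {α : Type*} [MeasurableSpace α] {μ : Measure α}

theorem integral_abs_eq_two_mul_integral_max_neg_zero {g : α → ℝ} (hg : Integrable g μ)
    (hg0 : ∫ x, g x ∂μ = 0) : ∫ x, |g x| ∂μ = 2 * ∫ x, max (-g x) 0 ∂μ := by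
  have habs : ∀ x, |g x| = g x + 2 * max (-g x) 0 := fun x ↦ by
    rcases le_total 0 (g x) with h | h
    · rw [abs_of_nonneg h, max_eq_right (by linarith)]; ring
    · rw [abs_of_nonpos h, max_eq_left (by linarith)]; ring
  have hneg : Integrable (fun x ↦ 2 * max (-g x) 0) μ := hg.neg.pos_part.const_mul 2
  simp_rw [habs]
  rw [integral_add hg hneg, integral_const_mul, hg0, zero_add]

theorem two_mul_sub_mul_measureReal_le_integral_abs_sub_average [IsFiniteMeasure μ]
    {f : α → ℝ} (hf : Integrable f μ) (s : ℝ) :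
    2 * ((⨍ x, f x ∂μ) - s) * μ.real {x | f x ≤ s} ≤ ∫ x, |f x - ⨍ a, f a ∂μ| ∂μ := by
  set A := ⨍ x, f x ∂μ
  have hfA : Integrable (fun x ↦ f x - A) μ := hf.sub (integrable_const A)
  rw [integral_abs_eq_two_mul_integral_max_neg_zero hfA (integral_sub_average μ f)]
  rcases le_or_gt A s with hAs | hsA
  · have : 0 ≤ ∫ x, max (-(f x - A)) 0 ∂μ := integral_nonneg fun x ↦ le_max_right _ _
    nlinarith [measureReal_nonneg (μ := μ) (s := {x | f x ≤ s})]
  have hmarkov := mul_meas_ge_le_integral_of_nonneg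
    (Filter.Eventually.of_forall fun x ↦ le_max_right (-(f x - A)) 0) hfA.neg.pos_part (A - s)
  have hsub : {x | f x ≤ s} ⊆ {x | A - s ≤ max (-(f x - A)) 0} := fun x (hx : f x ≤ s) ↦
    le_max_of_le_left (show A - s ≤ -(f x - A) by linarith)
  nlinarith [measureReal_mono (μ := μ) hsub]

theorem average_le_of_average_abs_sub_average_le [IsFiniteMeasure μ] {f : α → ℝ}
    (hf : Integrable f μ) {ε l s : ℝ} (hε : 0 ≤ ε) (hεl : ε < l) (hs : 0 ≤ s)
    (hosc : ⨍ x, |f x - ⨍ a, f a ∂μ| ∂μ ≤ ε * ⨍ x, f x ∂μ)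
    (hsublevel : l / 2 * μ.real Set.univ < μ.real {x | f x ≤ s}) :
    ⨍ x, f x ∂μ ≤ l / (l - ε) * s := by
  set A := ⨍ x, f x ∂μ
  have hlε : 0 < l - ε := by linarith
  rw [div_mul_eq_mul_div, le_div_iff₀ hlε]
  rcases le_or_gt A s with hAs | hsA
  · nlinarith
  have hu : 0 < μ.real Set.univ := by
    refine measureReal_nonneg.lt_of_ne fun h ↦ ?_
    rw [← h, mul_zero] at hsublevel
    linarith [measureReal_mono (μ := μ) (Set.subset_univ {x | f x ≤ s})]
  have hosc' : ∫ x, |f x - A| ∂μ ≤ ε * A * μ.real Set.univ := by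
    rwa [average_eq, smul_eq_mul, inv_mul_le_iff₀ hu, mul_comm] at hosc
  have hlower := two_mul_sub_mul_measureReal_le_integral_abs_sub_average hf s
  have hscaled : l * (A - s) * μ.real Set.univ ≤ ε * A * μ.real Set.univ := by
    nlinarith
  nlinarith [le_of_mul_le_mul_right hscaled hu]

theorem lt_measureReal_restrict_setOf_le {Q : Set α} (hQ : μ Q ≠ ⊤) {f : α → ℝ} {c s : ℝ}
    (hμs : μ {x ∈ Q | f x > s} < ENNReal.ofReal (1 - c) * μ Q) :
    c * (μ.restrict Q).real Set.univ < (μ.restrict Q).real {x | f x ≤ s} := by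
  have hfin : ∀ p : α → Prop, μ {x ∈ Q | p x} ≠ ⊤ := fun p ↦
    measure_ne_top_of_subset (Set.sep_subset Q p) hQ
  have hc : 0 ≤ 1 - c := by
    by_contra! hc
    simp [ENNReal.ofReal_of_nonpos hc.le] at hμs
  have hgt : μ.real {x ∈ Q | f x > s} < (1 - c) * μ.real Q := by
    rwa [← ENNReal.toReal_lt_toReal (hfin _) (ENNReal.mul_ne_top ENNReal.ofReal_ne_top hQ),
      ENNReal.toReal_mul, ENNReal.toReal_ofReal hc] at hμs
  have hcover : Q ⊆ {x ∈ Q | f x ≤ s} ∪ {x ∈ Q | f x > s} := fun x hx ↦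
    (le_or_gt (f x) s).imp (fun h ↦ ⟨hx, h⟩) (fun h ↦ ⟨hx, h⟩)
  have hsplit : μ.real Q ≤ μ.real {x ∈ Q | f x ≤ s} + μ.real {x ∈ Q | f x > s} :=
    (measureReal_mono hcover (measure_union_ne_top (hfin _) (hfin _))).trans
      (measureReal_union_le _ _)
  have hrestrict : μ.real {x ∈ Q | f x ≤ s} ≤ (μ.restrict Q).real {x | f x ≤ s} := by
    have : IsFiniteMeasure (μ.restrict Q) := isFiniteMeasure_restrict.mpr hQ
    exact ENNReal.toReal_mono (measure_ne_top _ _)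
      ((measure_mono (Set.inter_comm Q _).le).trans (Measure.le_restrict_apply Q _))
  rw [measureReal_restrict_apply_univ]
  linarith

end MeanOscillation

theorem muAvg_eq_setAverage {n : ℕ} (μ : Measure (Fin n → ℝ)) (Q : Set (Fin n → ℝ))
    (f : (Fin n → ℝ) → ℝ) : muAvg μ Q f = ⨍ x in Q, f x ∂μ := by
  rw [muAvg, setAverage_eq, smul_eq_mul, measureReal_def, div_eq_inv_mul]

theorem muOsc_eq_setAverage {n : ℕ} (μ : Measure (Fin n → ℝ)) (Q : Set (Fin n → ℝ))
    (f : (Fin n → ℝ) → ℝ) : muOsc μ Q f = ⨍ x in Q, |f x - ⨍ a in Q, f a ∂μ| ∂μ := by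
  rw [← muAvg_eq_setAverage, ← muAvg_eq_setAverage]
  rfl

theorem stmt7_general {n : ℕ} (μ : Measure (Fin n → ℝ))
    (Q : Set (Fin n → ℝ)) (hQfin : μ Q < ⊤)
    (f : (Fin n → ℝ) → ℝ) (hfint : IntegrableOn f Q μ)
    (ε : ℝ) (hε0 : 0 < ε)
    (hGR : muOsc μ Q f ≤ ε * muAvg μ Q f)
    (l : ℝ) (hl1 : ε < l)
    (s : ℝ) (hs : 0 ≤ s)
    (hμs : μ {x ∈ Q | f x > s} < ENNReal.ofReal (1 - l / 2) * μ Q) :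
    muAvg μ Q f ≤ l / (l - ε) * s := by
  have : IsFiniteMeasure (μ.restrict Q) := isFiniteMeasure_restrict.mpr hQfin.ne
  rw [muOsc_eq_setAverage, muAvg_eq_setAverage] at hGR
  rw [muAvg_eq_setAverage]
  exact average_le_of_average_abs_sub_average_le hfint hε0.le hl1 hs hGR
    (lt_measureReal_restrict_setOf_le hQfin.ne hμs)

/-- Inequality (4) of Korenovskyy–Lerner–Stokolos: if `Ω_μ(f;Q) ≤ ε f_{Q,μ}` with
`0 < ε < 2`, `ε < λ < 2`, and `s ≥ 0` satisfies
`μ{x ∈ Q : f(x) > s} < (1 − λ/2) μ(Q)`, then `f_{Q,μ} ≤ (λ/(λ − ε)) s`. -/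
theorem stmt7 {n : ℕ} (μ : Measure (Fin n → ℝ)) (hac : μ ≪ volume)
    (Q : Set (Fin n → ℝ)) (hQ : IsCube Q) (hQpos : 0 < μ Q) (hQfin : μ Q < ⊤)
    (f : (Fin n → ℝ) → ℝ) (hf0 : ∀ x ∈ Q, 0 ≤ f x) (hfint : IntegrableOn f Q μ)
    (ε : ℝ) (hε0 : 0 < ε) (hε2 : ε < 2)
    (hGR : muOsc μ Q f ≤ ε * muAvg μ Q f)
    (l : ℝ) (hl1 : ε < l) (hl2 : l < 2)
    (s : ℝ) (hs : 0 ≤ s)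
    (hμs : μ {x ∈ Q | f x > s} < ENNReal.ofReal (1 - l / 2) * μ Q) :
    muAvg μ Q f ≤ l / (l - ε) * s :=
  stmt7_general μ Q hQfin f hfint ε hε0 hGR l hl1 s hs hμs
end
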